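/- arXiv:2202.08068 — 5 statements merged into one kernel-verified Lean document; each statement's English description precedes it below -/
import Mathlib

section
/- Let G = (V, E) be a connected graph and let Ĝ = (V, E ∪ F) be an augmentation with F ⊆ binom(V,2) \ E. A vector x ∈ {0,1}^{E ∪ F} is the characteristic vector of a multicut of Ĝ lifted from G if and only if x satisfies: (i) for every cycle C in G and every edge f of C, x_f ≤ Σ_{e ∈ E_C \ {f}} x_e; (ii) for every uv ∈ F and every uv-path P in G, x_{uv} ≤ Σ_{e ∈ E_P} x_e; (iii) for every uv ∈ F and every uv-cut δ(U) in G, 1 − x_{uv} ≤ Σ_{e ∈ δ(U)} (1 − x_e). -/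
/-!
Along a walk of `G` between two blocks of a decomposition some edge crosses. This gives the path
inequalities of a lifted multicut, and its cycle inequalities once the rest of a cycle through a
cut edge `f` is read as a walk between the ends of `f`. A walk inside the common block of `u` and
`v` leaves `U` along an uncut edge, which gives the cut inequalities.

Conversely, let `P` be the components of the subgraph of `G` formed by the edges with `x e = 0`.
An edge `uv` with `x uv = 1` whose ends are joined by such a zero path violates a path inequality,
or a cycle inequality when `uv ∈ E`. An edge `uv ∈ F` with `x uv = 0` whose ends lie in different
components violates the cut inequality for `{U, Uᶜ}`, where `Uᶜ` is the set of vertices reachable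
from `v` without meeting the component `A` of `u`: both sides are connected since `G` is, and every
cut edge leaves `A`, hence has value 1.
-/

open Finset

open scoped Classical

variable {V : Type*}

/-- A decomposition of a graph `G`: a partition of the node set all of whose blocks
induce connected subgraphs. -/
def IsDecomposition (G : SimpleGraph V) (P : Set (Set V)) : Prop :=
  Setoid.IsPartition P ∧ ∀ U ∈ P, (G.induce U).Connected

/-- Two nodes lie in a common block of `P`. -/
def SameBlock (P : Set (Set V)) (u v : V) : Prop :=
  ∃ U ∈ P, u ∈ U ∧ v ∈ U

/-- The edge `e` straddles two distinct blocks of `P`. -/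
def Crosses (P : Set (Set V)) (e : Sym2 V) : Prop :=
  ∃ u v, e = s(u, v) ∧ ¬ SameBlock P u v

/-- The multicut of `G` induced by a decomposition `P`. -/
def inducedMulticut (G : SimpleGraph V) (P : Set (Set V)) : Set (Sym2 V) :=
  {e | e ∈ G.edgeSet ∧ Crosses P e}

/-- `M` is a multicut of `G`. -/
def IsMulticut (G : SimpleGraph V) (M : Set (Sym2 V)) : Prop :=
  ∃ P, IsDecomposition G P ∧ M = inducedMulticut G P

/-- The characteristic vector (in the ambient space `Sym2 V → ℝ`, with coordinates
outside the edge set of `H` pinned to `0`) of the multicut of `H` induced by `P`. -/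
noncomputable def multicutVec (H : SimpleGraph V) (P : Set (Set V)) : Sym2 V → ℝ :=
  fun e => if e ∈ H.edgeSet ∧ Crosses P e then 1 else 0

/-- Characteristic vectors of multicuts of `H` lifted from `G`. -/
def liftedVectors (G H : SimpleGraph V) : Set (Sym2 V → ℝ) :=
  {x | ∃ P, IsDecomposition G P ∧ x = multicutVec H P}

/-- The lifted multicut polytope with respect to `G` and `H`. -/
def LMC (G H : SimpleGraph V) : Set (Sym2 V → ℝ) :=
  convexHull ℝ (liftedVectors G H)

/-- The inequality `f x ≤ b` is valid for `P` and its equality set has affine dimension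
`|E ∪ F| - 1`, i.e. one less than the dimension of the corresponding lifted multicut
polytope for the augmented graph `H`. -/
def DefinesFacet (H : SimpleGraph V) (P : Set (Sym2 V → ℝ))
    (f : (Sym2 V → ℝ) → ℝ) (b : ℝ) : Prop :=
  (∀ x ∈ P, f x ≤ b) ∧
  Module.finrank ℝ (affineSpan ℝ {x | x ∈ P ∧ f x = b}).direction + 1 = Nat.card H.edgeSet

/-- The set of edges of `G` crossing the cut induced by `U`. -/
noncomputable def cutFinset {V : Type*} [Fintype V] (G : SimpleGraph V) (U : Set V) :
    Finset (Sym2 V) :=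
  Finset.univ.filter (fun e => e ∈ G.edgeSet ∧ ∃ a b, e = s(a, b) ∧ a ∈ U ∧ b ∉ U)

theorem SameBlock.symm {P : Set (Set V)} {u v : V} (h : SameBlock P u v) : SameBlock P v u :=
  let ⟨U, hU, hu, hv⟩ := h
  ⟨U, hU, hv, hu⟩

theorem crosses_mk_iff {P : Set (Set V)} {u v : V} : Crosses P s(u, v) ↔ ¬ SameBlock P u v := by
  refine ⟨?_, fun h => ⟨u, v, rfl, h⟩⟩
  rintro ⟨a, b, hab, hnot⟩ huv
  rcases Sym2.eq_iff.1 hab with ⟨rfl, rfl⟩ | ⟨rfl, rfl⟩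
  exacts [hnot huv, hnot huv.symm]

theorem Setoid.sameBlock_classes_iff (r : Setoid V) {u v : V} :
    SameBlock r.classes u v ↔ r u v := by
  refine ⟨?_, fun h => ⟨{z | r z v}, r.mem_classes v, h, r.refl v⟩⟩
  rintro ⟨_, ⟨w, rfl⟩, hu, hv⟩
  exact r.trans hu (r.symm hv)

theorem SimpleGraph.Walk.exists_mem_edges_crosses {G : SimpleGraph V} {P : Set (Set V)}
    (hP : Setoid.IsPartition P) {u v : V} (p : G.Walk u v) (huv : ¬ SameBlock P u v) :
    ∃ e ∈ p.edges, Crosses P e := by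
  obtain ⟨B, ⟨hB, huB⟩, -⟩ := hP.2 u
  obtain ⟨d, hd, hfst, hsnd⟩ := p.exists_boundary_dart B huB fun hvB => huv ⟨B, hB, huB, hvB⟩
  refine ⟨d.edge, List.mem_map_of_mem hd, crosses_mk_iff.2 ?_⟩
  rintro ⟨B', hB', hfst', hsnd'⟩
  exact hsnd ((hP.2 d.fst).unique ⟨hB', hfst'⟩ ⟨hB, hfst⟩ ▸ hsnd')

namespace SimpleGraph

variable {G : SimpleGraph V}

theorem Walk.IsTrail.exists_walk_of_mk_mem_edges {w : V} {c : G.Walk w w} (hc : c.IsTrail)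
    {a b : V} (hab : s(a, b) ∈ c.edges) :
    ∃ q : G.Walk a b, ∀ e ∈ q.edges, e ∈ c.edges ∧ e ≠ s(a, b) := by
  -- rotate `c` to start at `a` and cut it at `b`: one of the two arcs avoids `s(a, b)`
  set c' := c.rotate a (c.fst_mem_support_of_mem_edges hab)
  have hperm : c'.edges.Perm c.edges := (c.rotate_edges a _).perm
  have hb : b ∈ c'.support := c'.snd_mem_support_of_mem_edges (hperm.mem_iff.2 hab)
  set q₁ := c'.takeUntil b hb
  set q₂ := c'.dropUntil b hb
  have hsplit : c'.edges = q₁.edges ++ q₂.edges := by rw [← edges_append, take_spec]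
  have hdisj : q₁.edges.Disjoint q₂.edges :=
    List.disjoint_of_nodup_append (hsplit ▸ hperm.nodup_iff.2 hc.edges_nodup)
  have hmem : ∀ e, e ∈ q₁.edges ∨ e ∈ q₂.edges → e ∈ c.edges := fun e he =>
    hperm.mem_iff.1 (hsplit ▸ List.mem_append.2 he)
  rcases List.mem_append.1 (hsplit ▸ hperm.mem_iff.2 hab) with h₁ | h₂
  · refine ⟨q₂.reverse, fun e he => ?_⟩
    rw [edges_reverse, List.mem_reverse] at he
    exact ⟨hmem e (.inr he), fun h => hdisj (h ▸ h₁) he⟩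
  · exact ⟨q₁, fun e he => ⟨hmem e (.inl he), fun h => hdisj he (h ▸ h₂)⟩⟩

theorem Reachable.exists_isPath_of_deleteEdges {s : Set (Sym2 V)} {u v : V}
    (h : (G.deleteEdges s).Reachable u v) :
    ∃ p : G.Walk u v, p.IsPath ∧ ∀ e ∈ p.edges, e ∉ s := by
  obtain ⟨q⟩ := h
  refine ⟨q.toPath.1.mapLe (G.deleteEdges_le s), q.toPath.2.mapLe _, fun e he => ?_⟩
  rw [Walk.edges_mapLe_eq_edges] at he
  have := q.edges_subset_edgeSet (q.edges_toPath_subset_edges he)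
  rw [edgeSet_deleteEdges] at this
  exact this.2

theorem isDecomposition_classes_reachableSetoid {Z : SimpleGraph V} (hZ : Z ≤ G) :
    IsDecomposition G Z.reachableSetoid.classes := by
  refine ⟨Setoid.isPartition_classes _, ?_⟩
  rintro _ ⟨y, rfl⟩
  have hsupp : (Z.connectedComponentMk y).supp = {x | Z.Reachable x y} := by
    ext x; exact ConnectedComponent.eq
  have hconn : (Z.induce {x | Z.Reachable x y}).Connected :=
    hsupp ▸ (Z.connectedComponentMk y).connected_toSimpleGraph
  exact hconn.mono fun _ _ h => hZ h

theorem isDecomposition_pair {U : Set V} (hU : (G.induce U).Connected)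
    (hUc : (G.induce Uᶜ).Connected) : IsDecomposition G {U, Uᶜ} := by
  refine ⟨⟨?_, fun a => ?_⟩, by rintro _ (rfl | rfl) <;> assumption⟩
  · rintro (h | h)
    · exact hU.nonempty.elim fun ⟨a, ha⟩ => h.symm.subst (motive := (a ∈ ·)) ha
    · exact hUc.nonempty.elim fun ⟨a, ha⟩ => h.symm.subst (motive := (a ∈ ·)) ha
  by_cases ha : a ∈ U
  · exact ⟨U, ⟨.inl rfl, ha⟩, by rintro _ ⟨rfl | rfl, h⟩; exacts [rfl, absurd ha h]⟩
  · exact ⟨Uᶜ, ⟨.inr rfl, ha⟩, by rintro _ ⟨rfl | rfl, h⟩; exacts [absurd h ha, rfl]⟩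

section cut

variable {A : Set V} {v : V}

def reachAvoiding (G : SimpleGraph V) (A : Set V) (v : V) : Set V :=
  {w | ∃ p : G.Walk v w, ∀ z ∈ p.support, z ∉ A}

theorem notMem_of_mem_reachAvoiding {w : V} (hw : w ∈ G.reachAvoiding A v) : w ∉ A :=
  let ⟨p, hp⟩ := hw
  hp w p.end_mem_support

theorem mem_reachAvoiding_of_adj {a b : V} (ha : a ∈ G.reachAvoiding A v) (hab : G.Adj a b)
    (hb : b ∉ A) : b ∈ G.reachAvoiding A v := by
  obtain ⟨p, hp⟩ := ha
  refine ⟨p.concat hab, fun z hz => ?_⟩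
  rw [Walk.support_concat, List.mem_append, List.mem_singleton] at hz
  rcases hz with hz | rfl
  exacts [hp z hz, hb]

theorem connected_induce_reachAvoiding (hv : v ∉ A) :
    (G.induce (G.reachAvoiding A v)).Connected := by
  have hvB : v ∈ G.reachAvoiding A v := ⟨.nil, by simpa using hv⟩
  refine G.induce_connected_of_patches v hvB fun {w} ⟨p, hp⟩ => ?_
  refine ⟨{z | z ∈ p.support}, fun z hz => ?_, p.start_mem_support, p.end_mem_support,
    p.connected_induce_support.preconnected _ _⟩
  exact ⟨p.takeUntil z hz, fun y hy => hp y (p.support_takeUntil_subset_support hz hy)⟩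

theorem connected_induce_compl_reachAvoiding (hG : G.Connected) (hA : (G.induce A).Connected) :
    (G.induce (G.reachAvoiding A v)ᶜ).Connected := by
  set B := G.reachAvoiding A v
  have hAB : A ⊆ Bᶜ := fun a ha haB => notMem_of_mem_reachAvoiding haB ha
  obtain ⟨u, hu⟩ := hA.nonempty
  have hreachA : ∀ a (ha : a ∈ A), (G.induce Bᶜ).Reachable ⟨a, hAB ha⟩ ⟨u, hAB hu⟩ := fun a ha =>
    (hA.preconnected ⟨a, ha⟩ ⟨u, hu⟩).map (induceHomOfLE G hAB).toHom
  -- follow a walk towards `A`: it cannot enter `B` before reaching `A`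
  have hreach : ∀ {a b} (p : G.Walk a b) (ha : a ∉ B), b ∈ A →
      (G.induce Bᶜ).Reachable ⟨a, ha⟩ ⟨u, hAB hu⟩ := by
    intro a b p
    induction p with
    | nil => exact fun _ hb => hreachA _ hb
    | @cons a c b hac p ih =>
      intro ha hb
      by_cases haA : a ∈ A
      · exact hreachA a haA
      have hc : c ∉ B := fun hc => ha (mem_reachAvoiding_of_adj hc hac.symm haA)
      exact (show (G.induce Bᶜ).Adj ⟨a, ha⟩ ⟨c, hc⟩ from hac).reachable.trans (ih hc hb)
  refine (connected_iff _).2 ⟨fun ⟨a, ha⟩ ⟨b, hb⟩ => ?_, ⟨⟨u, hAB hu⟩⟩⟩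
  exact (hreach (hG.preconnected a u).some ha hu).trans
    (hreach (hG.preconnected b u).some hb hu).symm

theorem Connected.exists_isDecomposition_pair (hG : G.Connected) (hA : (G.induce A).Connected)
    (hv : v ∉ A) :
    ∃ U, A ⊆ U ∧ v ∉ U ∧ IsDecomposition G {U, Uᶜ} ∧
      ∀ a b, G.Adj a b → a ∈ U → b ∉ U → a ∈ A := by
  refine ⟨(G.reachAvoiding A v)ᶜ, fun a ha haB => notMem_of_mem_reachAvoiding haB ha,
    fun h => h ⟨.nil, by simpa using hv⟩, ?_, fun a b hab ha hb => ?_⟩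
  · exact isDecomposition_pair (connected_induce_compl_reachAvoiding hG hA)
      (by rw [compl_compl]; exact connected_induce_reachAvoiding hv)
  · by_contra haA
    exact ha (mem_reachAvoiding_of_adj (not_not.1 hb) hab.symm haA)

end cut

end SimpleGraph

def SatisfiesCycleInequalities (G : SimpleGraph V) (x : Sym2 V → ℝ) : Prop :=
  ∀ (w : V) (c : G.Walk w w), c.IsCycle → ∀ f ∈ c.edges,
    x f ≤ ∑ e ∈ c.edges.toFinset.erase f, x e

def SatisfiesPathInequalities (G Gh : SimpleGraph V) (x : Sym2 V → ℝ) : Prop :=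
  ∀ u v : V, Gh.Adj u v → ¬ G.Adj u v → ∀ p : G.Walk u v, p.IsPath →
    x s(u, v) ≤ ∑ e ∈ p.edges.toFinset, x e

def SatisfiesCutInequalities [Fintype V] (G Gh : SimpleGraph V) (x : Sym2 V → ℝ) : Prop :=
  ∀ u v : V, Gh.Adj u v → ¬ G.Adj u v → ∀ U : Set V, u ∈ U → v ∉ U →
    IsDecomposition G {U, Uᶜ} → 1 - x s(u, v) ≤ ∑ e ∈ cutFinset G U, (1 - x e)

section multicutVec

variable {G H : SimpleGraph V} {P : Set (Set V)}

theorem multicutVec_mk (u v : V) :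
    multicutVec H P s(u, v) = if H.Adj u v ∧ ¬ SameBlock P u v then 1 else 0 := by
  simp only [multicutVec, SimpleGraph.mem_edgeSet, crosses_mk_iff]

theorem multicutVec_nonneg (e : Sym2 V) : 0 ≤ multicutVec H P e := by
  unfold multicutVec; split_ifs <;> norm_num

theorem multicutVec_le_one (e : Sym2 V) : multicutVec H P e ≤ 1 := by
  unfold multicutVec; split_ifs <;> norm_num

theorem multicutVec_le_sum_of_walk (hle : G ≤ H) (hP : Setoid.IsPartition P)
    {u v : V} (p : G.Walk u v) {s : Finset (Sym2 V)} (hs : ∀ e ∈ p.edges, e ∈ s) :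
    multicutVec H P s(u, v) ≤ ∑ e ∈ s, multicutVec H P e := by
  by_cases huv : SameBlock P u v
  · rw [multicutVec_mk, if_neg fun h => h.2 huv]
    exact sum_nonneg fun e _ => multicutVec_nonneg e
  obtain ⟨e, he, hcross⟩ := p.exists_mem_edges_crosses hP huv
  have hxe : multicutVec H P e = 1 :=
    if_pos ⟨SimpleGraph.edgeSet_mono hle (p.edges_subset_edgeSet he), hcross⟩
  calc multicutVec H P s(u, v) ≤ multicutVec H P e := hxe ▸ multicutVec_le_one _
    _ ≤ ∑ e ∈ s, multicutVec H P e :=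
      single_le_sum (fun e _ => multicutVec_nonneg e) (hs e he)

theorem one_sub_multicutVec_le_sum_cutFinset [Fintype V]
    (hP : IsDecomposition G P) {u v : V} (huv : H.Adj u v) {U : Set V} (hu : u ∈ U)
    (hv : v ∉ U) :
    1 - multicutVec H P s(u, v) ≤ ∑ e ∈ cutFinset G U, (1 - multicutVec H P e) := by
  have hterm : ∀ e, 0 ≤ 1 - multicutVec H P e := fun e => sub_nonneg.2 (multicutVec_le_one e)
  by_cases hsame : SameBlock P u v
  swap
  · rw [multicutVec_mk, if_pos ⟨huv, hsame⟩, sub_self]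
    exact sum_nonneg fun e _ => hterm e
  obtain ⟨W, hW, huW, hvW⟩ := hsame
  obtain ⟨q⟩ := (hP.2 W hW).preconnected ⟨u, huW⟩ ⟨v, hvW⟩
  obtain ⟨d, -, hfst, hsnd⟩ := q.exists_boundary_dart (Subtype.val ⁻¹' U) hu hv
  have hcut : s(d.fst.1, d.snd.1) ∈ cutFinset G U := by
    simp only [cutFinset, mem_filter, mem_univ, true_and]
    exact ⟨d.adj, _, _, rfl, hfst, hsnd⟩
  have hzero : multicutVec H P s(d.fst.1, d.snd.1) = 0 := by
    rw [multicutVec_mk, if_neg fun h => h.2 ⟨W, hW, d.fst.2, d.snd.2⟩]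
  calc 1 - multicutVec H P s(u, v) ≤ 1 - multicutVec H P s(d.fst.1, d.snd.1) := by
        rw [hzero]; linarith [multicutVec_nonneg (H := H) (P := P) s(u, v)]
    _ ≤ ∑ e ∈ cutFinset G U, (1 - multicutVec H P e) := single_le_sum (fun e _ => hterm e) hcut

theorem satisfiesCycleInequalities_multicutVec (hle : G ≤ H) (hP : Setoid.IsPartition P) :
    SatisfiesCycleInequalities G (multicutVec H P) := by
  rintro w c hc ⟨a, b⟩ hab
  obtain ⟨q, hq⟩ := hc.isTrail.exists_walk_of_mk_mem_edges hab
  exact multicutVec_le_sum_of_walk hle hP q fun e he =>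
    mem_erase.2 ⟨(hq e he).2, List.mem_toFinset.2 (hq e he).1⟩

theorem satisfiesPathInequalities_multicutVec (hle : G ≤ H) (hP : Setoid.IsPartition P) :
    SatisfiesPathInequalities G H (multicutVec H P) := fun _ _ _ _ p _ =>
  multicutVec_le_sum_of_walk hle hP p fun _ => List.mem_toFinset.2

theorem satisfiesCutInequalities_multicutVec [Fintype V] (hP : IsDecomposition G P) :
    SatisfiesCutInequalities G H (multicutVec H P) := fun _ _ huv _ _ hu hv _ =>
  one_sub_multicutVec_le_sum_cutFinset hP huv hu hv

end multicutVec

section inequalities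

open SimpleGraph

variable {G Gh : SimpleGraph V} {x : Sym2 V → ℝ}

theorem le_zero_of_reachable_deleteEdges (hcyc : SatisfiesCycleInequalities G x)
    (hpath : SatisfiesPathInequalities G Gh x) {u v : V} (huv : Gh.Adj u v)
    (hr : (G.deleteEdges {e | x e ≠ 0}).Reachable u v) : x s(u, v) ≤ 0 := by
  obtain ⟨p, hp, hp0⟩ := hr.exists_isPath_of_deleteEdges
  simp only [Set.mem_ofPred_eq, not_not] at hp0
  by_cases hadj : G.Adj u v
  swap
  · simpa [sum_eq_zero fun e he => hp0 e (List.mem_toFinset.1 he)] using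
      hpath u v huv hadj p hp
  by_cases hmem : s(u, v) ∈ p.edges
  · exact (hp0 _ hmem).le
  have hc : (Walk.cons hadj p.reverse).IsCycle :=
    (Walk.cons_isCycle_iff _ _).2 ⟨hp.reverse, by simpa using hmem⟩
  have hsum : ∑ e ∈ (Walk.cons hadj p.reverse).edges.toFinset.erase s(u, v), x e = 0 := by
    refine sum_eq_zero fun e he => hp0 e ?_
    simp only [mem_erase, List.mem_toFinset, Walk.edges_cons, Walk.edges_reverse,
      List.mem_cons, List.mem_reverse] at he
    exact he.2.resolve_left he.1
  have := hcyc u _ hc s(u, v) (by simp)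
  rwa [hsum] at this

theorem one_le_of_not_reachable_deleteEdges [Fintype V] (hG : G.Connected)
    (h01 : ∀ e ∈ G.edgeSet, x e = 0 ∨ x e = 1) (hcut : SatisfiesCutInequalities G Gh x)
    {u v : V} (huv : Gh.Adj u v) (hnr : ¬ (G.deleteEdges {e | x e ≠ 0}).Reachable u v) :
    1 ≤ x s(u, v) := by
  set Z := G.deleteEdges {e | x e ≠ 0}
  have hZ : ∀ a b, G.Adj a b → ¬ Z.Adj a b → x s(a, b) = 1 := fun a b hab hZab =>
    (h01 _ hab).resolve_left fun h => hZab ((deleteEdges_adj ..).2 ⟨hab, not_not.2 h⟩)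
  by_cases hadj : G.Adj u v
  · exact (hZ u v hadj fun h => hnr h.reachable).ge
  have hA := (isDecomposition_classes_reachableSetoid (G.deleteEdges_le _)).2 _
    (Z.reachableSetoid.mem_classes u)
  obtain ⟨U, hAU, hvU, hdec, hcutA⟩ := hG.exists_isDecomposition_pair hA fun h => hnr h.symm
  have hsum : ∑ e ∈ cutFinset G U, (1 - x e) = 0 := by
    refine sum_eq_zero fun e he => ?_
    simp only [cutFinset, mem_filter, mem_univ, true_and] at he
    obtain ⟨hab, a, b, rfl, ha, hb⟩ := he
    have hau : Z.Reachable a u := hcutA a b hab ha hb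
    rw [hZ a b hab fun h => hb (hAU (h.symm.reachable.trans hau)), sub_self]
  linarith [hcut u v huv hadj U (hAU (Reachable.refl u)) hvU hdec]

theorem eq_multicutVec_of_inequalities [Fintype V] (hG : G.Connected) (hle : G ≤ Gh)
    (h01 : ∀ e ∈ Gh.edgeSet, x e = 0 ∨ x e = 1) (h0 : ∀ e ∉ Gh.edgeSet, x e = 0)
    (hcyc : SatisfiesCycleInequalities G x) (hpath : SatisfiesPathInequalities G Gh x)
    (hcut : SatisfiesCutInequalities G Gh x) :
    x = multicutVec Gh (G.deleteEdges {e | x e ≠ 0}).reachableSetoid.classes := by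
  have hG01 : ∀ e ∈ G.edgeSet, x e = 0 ∨ x e = 1 := fun e he => h01 e (edgeSet_mono hle he)
  funext e
  induction e using Sym2.ind with | _ a b => ?_
  rw [multicutVec_mk, Setoid.sameBlock_classes_iff]
  by_cases hab : Gh.Adj a b
  · rcases h01 s(a, b) hab with h | h
    · rw [h, if_neg]
      rintro ⟨-, hnr⟩
      linarith [one_le_of_not_reachable_deleteEdges hG hG01 hcut hab hnr]
    · refine h.trans (if_pos ⟨hab, fun hr => ?_⟩).symm
      linarith [le_zero_of_reachable_deleteEdges hcyc hpath hab hr]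
  · rw [h0 _ hab, if_neg fun h => hab h.1]

end inequalities

/-- a binary vector on the edges of the augmented graph `Gh` is the
characteristic vector of a multicut of `Gh` lifted from `G` iff it satisfies the cycle,
path and cut inequalities. -/
theorem liftedMulticut_iff_cycle_path_cut_inequalities
    {V : Type*} [Fintype V] (G Gh : SimpleGraph V)
    (hG : G.Connected) (hle : G ≤ Gh)
    (x : Sym2 V → ℝ)
    (h01 : ∀ e ∈ Gh.edgeSet, x e = 0 ∨ x e = 1)
    (h0 : ∀ e ∉ Gh.edgeSet, x e = 0) :
    x ∈ liftedVectors G Gh ↔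
      ((∀ (w : V) (c : G.Walk w w), c.IsCycle → ∀ f ∈ c.edges,
          x f ≤ ∑ e ∈ c.edges.toFinset.erase f, x e) ∧
       (∀ u v : V, Gh.Adj u v → ¬ G.Adj u v → ∀ p : G.Walk u v, p.IsPath →
          x s(u, v) ≤ ∑ e ∈ p.edges.toFinset, x e) ∧
       (∀ u v : V, Gh.Adj u v → ¬ G.Adj u v → ∀ U : Set V,
          u ∈ U → v ∉ U → IsDecomposition G {U, Uᶜ} →
          1 - x s(u, v) ≤ ∑ e ∈ cutFinset G U, (1 - x e))) := by
  constructor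
  · rintro ⟨P, hP, rfl⟩
    exact ⟨satisfiesCycleInequalities_multicutVec hle hP.1,
      satisfiesPathInequalities_multicutVec hle hP.1, satisfiesCutInequalities_multicutVec hP⟩
  · rintro ⟨hcyc, hpath, hcut⟩
    exact ⟨_, SimpleGraph.isDecomposition_classes_reachableSetoid (G.deleteEdges_le _),
      eq_multicutVec_of_inequalities hG hle h01 h0 hcyc hpath hcut⟩
end

section
/- Let G = (V, E) be a connected graph and Ĝ = (V, E ∪ F) an augmentation. The lifted multicut polytope LMC(G, Ĝ), defined as the convex hull in R^{E∪F} of characteristic vectors of multicuts of Ĝ lifted from G, has dimension |E ∪ F| (it is full-dimensional). -/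
open Finset

open scoped Classical

variable {V : Type*}

/-! ### Auxiliary material -/

/-- The partition consisting of a block `U` together with singletons of all other vertices. -/
def blockify (U : Set V) : Set (Set V) :=
  insert U ((fun v => ({v} : Set V)) '' Uᶜ)

lemma induce_singleton_connected (G : SimpleGraph V) (v : V) :
    (G.induce ({v} : Set V)).Connected := by
  have hne : Nonempty ↥({v} : Set V) := ⟨⟨v, rfl⟩⟩
  refine SimpleGraph.Connected.mk ?_
  intro a b
  have : a = b := Subtype.ext ((Set.mem_singleton_iff.mp a.2).trans
    (Set.mem_singleton_iff.mp b.2).symm)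
  subst this
  exact SimpleGraph.Reachable.refl a

lemma blockify_isDecomposition (G : SimpleGraph V) (U : Set V)
    (hne : U.Nonempty) (hconn : (G.induce U).Connected) :
    IsDecomposition G (blockify U) := by
  constructor
  · constructor
    · intro h
      rcases Set.mem_insert_iff.mp h with h | ⟨v, _, h⟩
      · exact hne.ne_empty h.symm
      · exact (Set.singleton_nonempty v).ne_empty h
    · intro a
      by_cases ha : a ∈ U
      · refine ⟨U, ⟨Set.mem_insert _ _, ha⟩, ?_⟩
        rintro b ⟨hb, hab⟩
        rcases Set.mem_insert_iff.mp hb with rfl | ⟨v, hv, rfl⟩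
        · rfl
        · exact absurd (hab ▸ ha) hv
      · refine ⟨{a}, ⟨Set.mem_insert_iff.mpr (Or.inr ⟨a, ha, rfl⟩), rfl⟩, ?_⟩
        rintro b ⟨hb, hab⟩
        rcases Set.mem_insert_iff.mp hb with rfl | ⟨v, _, rfl⟩
        · exact absurd hab ha
        · rw [Set.mem_singleton_iff.mp hab]
  · intro W hW
    rcases Set.mem_insert_iff.mp hW with rfl | ⟨v, _, rfl⟩
    · exact hconn
    · exact induce_singleton_connected G v

lemma sameBlock_blockify (U : Set V) {x y : V} :
    SameBlock (blockify U) x y ↔ (x ∈ U ∧ y ∈ U) ∨ x = y := by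
  constructor
  · rintro ⟨W, hW, hx, hy⟩
    rcases Set.mem_insert_iff.mp hW with rfl | ⟨v, _, rfl⟩
    · exact Or.inl ⟨hx, hy⟩
    · exact Or.inr (hx.trans hy.symm)
  · rintro (⟨hx, hy⟩ | rfl)
    · exact ⟨U, Set.mem_insert _ _, hx, hy⟩
    · by_cases hx : x ∈ U
      · exact ⟨U, Set.mem_insert _ _, hx, hx⟩
      · exact ⟨{x}, Set.mem_insert_iff.mpr (Or.inr ⟨x, hx, rfl⟩), rfl, rfl⟩

/-- The vector associated to the partition `blockify U`. -/
noncomputable def blockVec (Gh : SimpleGraph V) (U : Set V) : Sym2 V → ℝ :=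
  fun e => if e ∈ Gh.edgeSet ∧ ¬ (∀ x ∈ e, x ∈ U) then 1 else 0

lemma multicutVec_blockify (Gh : SimpleGraph V) (U : Set V) :
    multicutVec Gh (blockify U) = blockVec Gh U := by
  funext e
  induction e using Sym2.ind with
  | _ a b =>
    by_cases he : s(a, b) ∈ Gh.edgeSet
    · have hab : a ≠ b := (Gh.mem_edgeSet.mp he).ne
      have hmem : (∀ x ∈ s(a, b), x ∈ U) ↔ (a ∈ U ∧ b ∈ U) := by
        constructor
        · intro h
          exact ⟨h a (Sym2.mem_mk_left a b), h b (Sym2.mem_mk_right a b)⟩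
        · rintro ⟨ha, hb⟩ x hx
          rcases Sym2.mem_iff.mp hx with rfl | rfl
          · exact ha
          · exact hb
      have hcross : Crosses (blockify U) s(a, b) ↔ ¬ (a ∈ U ∧ b ∈ U) := by
        constructor
        · rintro ⟨u, v, huv, hnsb⟩ hab'
          rcases Sym2.eq_iff.mp huv with ⟨rfl, rfl⟩ | ⟨rfl, rfl⟩
          · exact hnsb ((sameBlock_blockify U).mpr (Or.inl hab'))
          · exact hnsb ((sameBlock_blockify U).mpr (Or.inl ⟨hab'.2, hab'.1⟩))
        · intro h
          refine ⟨a, b, rfl, fun hsb => ?_⟩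
          rcases (sameBlock_blockify U).mp hsb with h' | rfl
          · exact h h'
          · exact hab rfl
      unfold multicutVec blockVec
      rw [hmem, hcross]
      by_cases hc : s(a, b) ∈ Gh.edgeSet ∧ ¬ (a ∈ U ∧ b ∈ U)
      · rw [if_pos hc, if_pos hc]
      · rw [if_neg hc, if_neg hc]
    · simp [multicutVec, blockVec, he]

lemma blockVec_mem (G Gh : SimpleGraph V) (U : Set V) (hne : U.Nonempty)
    (hconn : (G.induce U).Connected) : blockVec Gh U ∈ liftedVectors G Gh :=
  ⟨blockify U, blockify_isDecomposition G U hne hconn, (multicutVec_blockify Gh U).symm⟩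

lemma sum_single_apply [Fintype V] (s : Finset (Sym2 V)) (x : Sym2 V) :
    (∑ e ∈ s, Pi.single e (1 : ℝ)) x = if x ∈ s then 1 else 0 := by
  rw [Finset.sum_apply]
  simp only [Pi.single_apply]
  exact Finset.sum_ite_eq s x (fun _ => (1 : ℝ))

lemma dist_lt_of_mem_support {G : SimpleGraph V} {u v a b : V} (p : G.Walk u v)
    (ha : a ∈ p.support) (hb : b ∈ p.support) (hne : s(a, b) ≠ s(u, v)) :
    G.dist a b < p.length := by
  classical
  have hspec := p.take_spec ha
  have hlen : (p.takeUntil a ha).length + (p.dropUntil a ha).length = p.length := by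
    have := congrArg SimpleGraph.Walk.length hspec
    rwa [SimpleGraph.Walk.length_append] at this
  have hb' : b ∈ (p.takeUntil a ha).support ∨ b ∈ (p.dropUntil a ha).support := by
    rw [← SimpleGraph.Walk.mem_support_append_iff, hspec]
    exact hb
  rcases hb' with hb1 | hb2
  · -- b occurs before a : use the b-to-a part of takeUntil
    set q1 := p.takeUntil a ha with hq1
    have hlen1 : (q1.takeUntil b hb1).length + (q1.dropUntil b hb1).length = q1.length := by
      have := congrArg SimpleGraph.Walk.length (q1.take_spec hb1)
      rwa [SimpleGraph.Walk.length_append] at this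
    have hd : G.dist a b ≤ (q1.dropUntil b hb1).length := by
      rw [SimpleGraph.dist_comm]
      exact SimpleGraph.dist_le (q1.dropUntil b hb1)
    have hpos : 0 < (q1.takeUntil b hb1).length + (p.dropUntil a ha).length := by
      by_contra h
      push_neg at h
      have h1 : (q1.takeUntil b hb1).length = 0 := by omega
      have h2 : (p.dropUntil a ha).length = 0 := by omega
      have hub : u = b := SimpleGraph.Walk.eq_of_length_eq_zero h1
      have hav : a = v := SimpleGraph.Walk.eq_of_length_eq_zero h2
      exact hne (by rw [← hub, ← hav, Sym2.eq_swap])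
    omega
  · -- b occurs after a : use the a-to-b part of dropUntil
    set q2 := p.dropUntil a ha with hq2
    have hlen2 : (q2.takeUntil b hb2).length + (q2.dropUntil b hb2).length = q2.length := by
      have := congrArg SimpleGraph.Walk.length (q2.take_spec hb2)
      rwa [SimpleGraph.Walk.length_append] at this
    have hd : G.dist a b ≤ (q2.takeUntil b hb2).length :=
      SimpleGraph.dist_le (q2.takeUntil b hb2)
    have hpos : 0 < (p.takeUntil a ha).length + (q2.dropUntil b hb2).length := by
      by_contra h
      push_neg at h
      have h1 : (p.takeUntil a ha).length = 0 := by omega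
      have h2 : (q2.dropUntil b hb2).length = 0 := by omega
      have hua : u = a := SimpleGraph.Walk.eq_of_length_eq_zero h1
      have hbv : b = v := SimpleGraph.Walk.eq_of_length_eq_zero h2
      exact hne (by rw [← hua, ← hbv])
    omega

lemma allOnes_mem [Fintype V] (G Gh : SimpleGraph V) (hG : G.Connected) :
    (fun e => if e ∈ Gh.edgeSet then (1 : ℝ) else 0) ∈ liftedVectors G Gh := by
  obtain ⟨v₀⟩ : Nonempty V := hG.nonempty
  have h := blockVec_mem G Gh {v₀} (Set.singleton_nonempty v₀)
    (induce_singleton_connected G v₀)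
  convert h using 1
  funext e
  induction e using Sym2.ind with
  | _ a b =>
    by_cases he : s(a, b) ∈ Gh.edgeSet
    · have hab : a ≠ b := (Gh.mem_edgeSet.mp he).ne
      have : ¬ (∀ x ∈ s(a, b), x ∈ ({v₀} : Set V)) := by
        intro h'
        have ha := h' a (Sym2.mem_mk_left a b)
        have hb := h' b (Sym2.mem_mk_right a b)
        exact hab (ha.trans hb.symm)
      have hcond : s(a, b) ∈ Gh.edgeSet ∧ ¬ ∀ x ∈ s(a, b), x ∈ ({v₀} : Set V) := ⟨he, this⟩
      show (if s(a, b) ∈ Gh.edgeSet then (1 : ℝ) else 0) = _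
      rw [if_pos he]
      exact (if_pos hcond).symm
    · simp [blockVec, he]

lemma single_mem_span [Fintype V] (G Gh : SimpleGraph V) (hG : G.Connected) :
    ∀ n (u v : V), s(u, v) ∈ Gh.edgeSet → G.dist u v ≤ n →
      Pi.single s(u, v) (1 : ℝ) ∈ Submodule.span ℝ (liftedVectors G Gh) := by
  intro n
  induction n with
  | zero =>
    intro u v he hd
    have huv : u ≠ v := (Gh.mem_edgeSet.mp he).ne
    have : G.dist u v = 0 := Nat.le_zero.mp hd
    exact absurd ((hG u v).dist_eq_zero_iff.mp this) huv
  | succ n ih =>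
    intro u v he hd
    obtain ⟨p, hp⟩ := (hG u v).exists_walk_length_eq_dist
    set U : Set V := {x | x ∈ p.support} with hU
    have hUconn : (G.induce U).Connected := p.connected_induce_support
    have hUne : U.Nonempty := ⟨u, p.start_mem_support⟩
    set s : Finset (Sym2 V) :=
      Finset.univ.filter (fun e => e ∈ Gh.edgeSet ∧ ∀ x ∈ e, x ∈ U) with hs
    have hgsum : (∑ e ∈ s, Pi.single e (1 : ℝ)) ∈ Submodule.span ℝ (liftedVectors G Gh) := by
      have h1 := allOnes_mem G Gh hG
      have h2 := blockVec_mem G Gh U hUne hUconn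
      have heq : (∑ e ∈ s, Pi.single e (1 : ℝ)) =
          (fun e => if e ∈ Gh.edgeSet then (1 : ℝ) else 0) - blockVec Gh U := by
        funext x
        rw [Pi.sub_apply, sum_single_apply, hs]
        simp only [Finset.mem_filter, Finset.mem_univ, true_and]
        by_cases hx1 : x ∈ Gh.edgeSet <;> by_cases hx2 : ∀ y ∈ x, y ∈ U
        · have hA : x ∈ Gh.edgeSet ∧ ∀ y ∈ x, y ∈ U := ⟨hx1, hx2⟩
          have hB : ¬ (x ∈ Gh.edgeSet ∧ ¬ ∀ y ∈ x, y ∈ U) := fun h => h.2 hx2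
          rw [if_pos hA, if_pos hx1, show blockVec Gh U x = 0 from if_neg hB]
          ring
        · have hA : ¬ (x ∈ Gh.edgeSet ∧ ∀ y ∈ x, y ∈ U) := fun h => hx2 h.2
          have hB : x ∈ Gh.edgeSet ∧ ¬ ∀ y ∈ x, y ∈ U := ⟨hx1, hx2⟩
          rw [if_neg hA, if_pos hx1, show blockVec Gh U x = 1 from if_pos hB]
          ring
        · have hA : ¬ (x ∈ Gh.edgeSet ∧ ∀ y ∈ x, y ∈ U) := fun h => hx1 h.1
          have hB : ¬ (x ∈ Gh.edgeSet ∧ ¬ ∀ y ∈ x, y ∈ U) := fun h => hx1 h.1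
          rw [if_neg hA, if_neg hx1, show blockVec Gh U x = 0 from if_neg hB]
          ring
        · have hA : ¬ (x ∈ Gh.edgeSet ∧ ∀ y ∈ x, y ∈ U) := fun h => hx1 h.1
          have hB : ¬ (x ∈ Gh.edgeSet ∧ ¬ ∀ y ∈ x, y ∈ U) := fun h => hx1 h.1
          rw [if_neg hA, if_neg hx1, show blockVec Gh U x = 0 from if_neg hB]
          ring
      rw [heq]
      exact sub_mem (Submodule.subset_span h1) (Submodule.subset_span h2)
    have hes : s(u, v) ∈ s := by
      rw [hs, Finset.mem_filter]
      refine ⟨Finset.mem_univ _, he, ?_⟩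
      intro x hx
      rcases Sym2.mem_iff.mp hx with rfl | rfl
      · exact p.start_mem_support
      · exact p.end_mem_support
    have hsplit : Pi.single s(u, v) (1 : ℝ) =
        (∑ e ∈ s, Pi.single e (1 : ℝ)) - ∑ e ∈ s.erase s(u, v), Pi.single e (1 : ℝ) := by
      rw [← Finset.add_sum_erase s _ hes]
      abel
    rw [hsplit]
    refine sub_mem hgsum (Submodule.sum_mem _ ?_)
    intro e' he'
    obtain ⟨hne, hemem⟩ := Finset.mem_erase.mp he'
    rw [hs, Finset.mem_filter] at hemem
    obtain ⟨-, heE, hinU⟩ := hemem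
    revert hne heE hinU
    induction e' using Sym2.ind with
    | _ a b =>
      intro hne heE hinU
      have ha : a ∈ p.support := hinU a (Sym2.mem_mk_left a b)
      have hb : b ∈ p.support := hinU b (Sym2.mem_mk_right a b)
      have hlt : G.dist a b < p.length := dist_lt_of_mem_support p ha hb hne
      have : G.dist a b ≤ n := by omega
      exact ih a b heE this

lemma span_lifted_eq [Fintype V] (G Gh : SimpleGraph V) (hG : G.Connected) :
    Submodule.span ℝ (liftedVectors G Gh) =
      Submodule.span ℝ (Set.range fun e : Gh.edgeSet => Pi.single (e : Sym2 V) (1 : ℝ)) := by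
  apply le_antisymm
  · rw [Submodule.span_le]
    rintro x ⟨P, -, rfl⟩
    have heq : multicutVec Gh P =
        ∑ e ∈ Finset.univ.filter (fun e => e ∈ Gh.edgeSet ∧ Crosses P e),
          Pi.single e (1 : ℝ) := by
      funext x
      rw [sum_single_apply]
      simp [multicutVec]
    rw [SetLike.mem_coe, heq]
    refine Submodule.sum_mem _ ?_
    intro e hemem
    rw [Finset.mem_filter] at hemem
    exact Submodule.subset_span ⟨⟨e, hemem.2.1⟩, rfl⟩
  · rw [Submodule.span_le]
    rintro x ⟨⟨e, he⟩, rfl⟩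
    induction e using Sym2.ind with
    | _ u v =>
      exact single_mem_span G Gh hG (G.dist u v) u v he le_rfl

/-- the lifted multicut polytope is full-dimensional, of dimension
`|E ∪ F|`. -/
theorem lmc_full_dimensional
    {V : Type*} [Fintype V] (G Gh : SimpleGraph V)
    (hG : G.Connected) (hle : G ≤ Gh) :
    Module.finrank ℝ (affineSpan ℝ (LMC G Gh)).direction = Nat.card Gh.edgeSet := by
  classical
  have h0 : (0 : Sym2 V → ℝ) ∈ liftedVectors G Gh := by
    have hconn : (G.induce (Set.univ : Set V)).Connected :=
      (SimpleGraph.Iso.connected_iff (SimpleGraph.induceUnivIso G)).mpr hG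
    have h := blockVec_mem G Gh Set.univ (have : Nonempty V := hG.nonempty; Set.univ_nonempty) hconn
    convert h using 1
    funext e
    simp [blockVec]
  have hvs : vectorSpan ℝ (liftedVectors G Gh) = Submodule.span ℝ (liftedVectors G Gh) := by
    apply le_antisymm
    · rw [vectorSpan_def, Submodule.span_le]
      rintro x ⟨y, hy, z, hz, rfl⟩
      exact sub_mem (Submodule.subset_span hy) (Submodule.subset_span hz)
    · rw [Submodule.span_le]
      intro x hx
      have := vsub_mem_vectorSpan ℝ hx h0
      simpa using this
  have hli : LinearIndependent ℝ (fun e : Gh.edgeSet => (Pi.single (e : Sym2 V) 1 : Sym2 V → ℝ)) := by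
    have hbase : LinearIndependent ℝ (fun i : Sym2 V => (Pi.single i 1 : Sym2 V → ℝ)) := by
      have hfun : ⇑(Pi.basisFun ℝ (Sym2 V)) = fun i : Sym2 V => (Pi.single i 1 : Sym2 V → ℝ) :=
        funext fun i => by simp
      rw [← hfun]
      exact (Pi.basisFun ℝ (Sym2 V)).linearIndependent
    exact hbase.comp (fun e : Gh.edgeSet => (e : Sym2 V)) Subtype.val_injective
  have hrank := finrank_span_eq_card hli
  rw [LMC, affineSpan_convexHull, direction_affineSpan, hvs, span_lifted_eq G Gh hG,
    hrank, Nat.card_eq_fintype_card]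
end

section
/- Let T be the path with nodes V = {0, …, n} and edges {i, i+1} for 0 ≤ i ≤ n−1, where n ≥ 2. Then LMC(T) equals the set of all x ∈ R^{binom(V,2)} satisfying: x_{0n} ≤ 1; x_{in} ≤ x_{i−1,n} for 1 ≤ i ≤ n−1; x_{0i} ≤ x_{0,i+1} for 1 ≤ i ≤ n−1; x_{i−1,i+1} ≤ x_{i−1,i} + x_{i,i+1} for 1 ≤ i ≤ n−1; and x_{jk} + x_{j+1,k−1} ≤ x_{j+1,k} + x_{j,k−1} for all 0 ≤ j < k−2 ≤ n−2. -/
/-!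
The vertices of `LMC(T)` are the cut vectors of interval partitions, i.e. of breakpoint sets
`S ⊆ {1, …, n}`; they satisfy the inequalities, and these cut out a convex set.

Conversely, put `y_{uv} = 1 - x_{uv}` and `d_b(a) = y_{ab} - y_{a-1,b}` (with `y_{-1,b} = 0`).
The inequalities give `d_b(a) ≥ 0` for `a < b` and `d_{b+1}(a) ≤ d_b(a)` for `a ≤ b < n` (for
`a = b = 0` this is `x_{01} ≥ 0`, which takes a chain of them and `n ≥ 2`). So `y` is the
same-block probability of a Markov chain on breakpoint sets which lets node `b + 1` join the block
`[a, b]` of node `b` with probability `d_{b+1}(a) / d_b(a)`; the law of that chain writes `x` as a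
convex combination of vertices.
-/

open Finset

open scoped Classical

variable {V : Type*}

open Fin.NatCast

namespace PathMulticut

open SimpleGraph

variable {n : ℕ}

lemma funext_sym2_of_le {α β : Type*} [LinearOrder α] {f g : Sym2 α → β}
    (h : ∀ a b, a ≤ b → f s(a, b) = g s(a, b)) : f = g := by
  funext e
  induction e with
  | _ a b =>
    rcases le_total a b with hab | hba
    · exact h a b hab
    · rw [Sym2.eq_swap]
      exact h b a hba

lemma sameBlock_symm {P : Set (Set V)} {u v : V} (h : SameBlock P u v) : SameBlock P v u :=
  let ⟨U, hU, hu, hv⟩ := h; ⟨U, hU, hv, hu⟩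

lemma sameBlock_trans {P : Set (Set V)} (hP : Setoid.IsPartition P) {u v w : V}
    (huv : SameBlock P u v) (hvw : SameBlock P v w) : SameBlock P u w := by
  obtain ⟨U, hU, hu, hv⟩ := huv
  obtain ⟨U', hU', hv', hw⟩ := hvw
  obtain rfl := (hP.2 v).unique ⟨hU, hv⟩ ⟨hU', hv'⟩
  exact ⟨U, hU, hu, hw⟩

lemma sameBlock_refl {P : Set (Set V)} (hP : Setoid.IsPartition P) (u : V) : SameBlock P u u :=
  let ⟨U, ⟨hU, hu⟩, _⟩ := hP.2 u; ⟨U, hU, hu, hu⟩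

lemma crosses_mk_iff {P : Set (Set V)} {u v : V} : Crosses P s(u, v) ↔ ¬ SameBlock P u v := by
  refine ⟨?_, fun h => ⟨u, v, rfl, h⟩⟩
  rintro ⟨a, b, hab, hnot⟩ huv
  rcases Sym2.eq_iff.1 hab with ⟨rfl, rfl⟩ | ⟨rfl, rfl⟩
  exacts [hnot huv, hnot (sameBlock_symm huv)]

lemma multicutVec_top_mk {P : Set (Set V)} (hP : Setoid.IsPartition P) (u v : V) :
    multicutVec ⊤ P s(u, v) = if SameBlock P u v then 0 else 1 := by
  by_cases h : SameBlock P u v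
  · simp [multicutVec, crosses_mk_iff, h]
  · have huv : u ≠ v := fun huv => h (huv ▸ sameBlock_refl hP u)
    simp [multicutVec, crosses_mk_iff, h, huv]

lemma preconnected_induce_pathGraph_iff {U : Set (Fin n)} :
    ((pathGraph n).induce U).Preconnected ↔ U.OrdConnected := by
  constructor
  · refine fun hU => ⟨fun u hu v hv w ⟨huw, hwv⟩ => ?_⟩
    by_contra hw
    have hside : ∀ c d : U, ((pathGraph n).induce U).Adj c d →
        ((c : Fin n) < w ↔ (d : Fin n) < w) := by
      intro c d hcd
      have hc : (c : Fin n) ≠ w := fun h => hw (h ▸ c.2)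
      have hd : (d : Fin n) ≠ w := fun h => hw (h ▸ d.2)
      simp only [comap_adj, Function.Embedding.subtype_apply, pathGraph_adj] at hcd
      rw [Fin.lt_def, Fin.lt_def]
      rw [Ne, Fin.ext_iff] at hc hd
      omega
    have hconst : ∀ c : U, ((pathGraph n).induce U).Reachable ⟨u, hu⟩ c → (u < w ↔ c < w) := by
      intro c hc
      replace hc := (reachable_iff_reflTransGen _ _).1 hc
      induction hc with
      | refl => rfl
      | tail _ hcd ih => exact ih.trans (hside _ _ hcd)
    have hu' : u < w := lt_of_le_of_ne huw (fun h => hw (h ▸ hu))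
    exact absurd ((hconst ⟨v, hv⟩ (hU _ _)).1 hu') (not_lt.2 hwv)
  · intro hU ⟨u, hu⟩ ⟨v, hv⟩
    wlog huv : u ≤ v generalizing u v
    · exact (this v hv u hu (le_of_not_ge huv)).symm
    obtain ⟨d, hd⟩ := Nat.exists_eq_add_of_le (Fin.le_def.1 huv)
    induction d generalizing v with
    | zero =>
      obtain rfl : v = u := Fin.ext hd
      rfl
    | succ d ih =>
      have hw : (⟨u + d, by omega⟩ : Fin n) ∈ U :=
        hU.out hu hv ⟨Fin.le_def.2 (by simp), Fin.le_def.2 (by simp; omega)⟩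
      refine (ih _ hw (Fin.le_def.2 (by simp)) rfl).trans (Adj.reachable ?_)
      simp only [comap_adj, Function.Embedding.subtype_apply, pathGraph_adj]
      omega

def breakCount (S : Finset ℕ) (t : ℕ) : ℕ := #{s ∈ S | s ≤ t}

lemma breakCount_mono (S : Finset ℕ) : Monotone (breakCount S) := fun _ _ h =>
  card_le_card (monotone_filter_right S fun _ _ hs => hs.trans h)

lemma breakCount_eq_iff {S : Finset ℕ} {a b : ℕ} (hab : a ≤ b) :
    breakCount S a = breakCount S b ↔ Disjoint S (Ioc a b) := by
  have hsub : {s ∈ S | s ≤ a} ⊆ {s ∈ S | s ≤ b} :=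
    monotone_filter_right S fun _ _ hs => hs.trans hab
  constructor
  · intro h
    have heq := eq_of_subset_of_card_le hsub h.ge
    refine disjoint_left.2 fun s hs hsI => ?_
    have : s ∈ {s ∈ S | s ≤ a} := heq ▸ mem_filter.2 ⟨hs, (mem_Ioc.1 hsI).2⟩
    exact absurd (mem_filter.1 this).2 (not_le.2 (mem_Ioc.1 hsI).1)
  · intro h
    refine congrArg card (filter_congr fun s hs => ?_)
    have := disjoint_left.1 h hs
    rw [mem_Ioc] at this
    omega

/-- The multicut vector of the partition of `{0, …, n}` into intervals starting at `0` and at the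
points of `S`. -/
noncomputable def cutVec (n : ℕ) (S : Finset ℕ) : Sym2 (Fin (n + 1)) → ℝ :=
  Sym2.lift ⟨fun a b => if breakCount S a = breakCount S b then 0 else 1, fun a b => by
    simp only [eq_comm]⟩

lemma cutVec_mk (S : Finset ℕ) (a b : Fin (n + 1)) :
    cutVec n S s(a, b) = if breakCount S a = breakCount S b then 0 else 1 := rfl

lemma cutVec_mk_of_le (S : Finset ℕ) {a b : Fin (n + 1)} (hab : a ≤ b) :
    cutVec n S s(a, b) = if Disjoint S (Ioc (a : ℕ) b) then 0 else 1 := by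
  simp only [cutVec_mk, breakCount_eq_iff (Fin.le_def.1 hab)]

def intervalPartition (n : ℕ) (S : Finset ℕ) : Set (Set (Fin (n + 1))) :=
  (Setoid.ker fun v : Fin (n + 1) => breakCount S v).classes

lemma sameBlock_intervalPartition {S : Finset ℕ} {a b : Fin (n + 1)} :
    SameBlock (intervalPartition n S) a b ↔ breakCount S a = breakCount S b := by
  constructor
  · rintro ⟨_, ⟨c, rfl⟩, ha, hb⟩
    exact ha.trans hb.symm
  · exact fun h => ⟨_, Setoid.mem_classes _ b, h, rfl⟩

lemma isDecomposition_intervalPartition (S : Finset ℕ) :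
    IsDecomposition (SimpleGraph.pathGraph (n + 1)) (intervalPartition n S) := by
  refine ⟨Setoid.isPartition_classes _, ?_⟩
  rintro _ ⟨c, rfl⟩
  refine (connected_iff _).2 ⟨preconnected_induce_pathGraph_iff.2 ?_, ⟨c, rfl⟩⟩
  exact Set.ordConnected_singleton.preimage_mono
    ((breakCount_mono S).comp fun _ _ h => Fin.le_def.1 h)

lemma multicutVec_intervalPartition (S : Finset ℕ) :
    multicutVec ⊤ (intervalPartition n S) = cutVec n S := by
  funext e
  induction e with
  | _ a b =>
    rw [multicutVec_top_mk (isDecomposition_intervalPartition S).1, cutVec_mk]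
    simp only [sameBlock_intervalPartition]

noncomputable def breakpoints (n : ℕ) (P : Set (Set (Fin (n + 1)))) : Finset ℕ :=
  {i ∈ Icc 1 n | ¬ SameBlock P ((i - 1 : ℕ) : Fin (n + 1)) (i : Fin (n + 1))}

lemma sameBlock_iff_disjoint_breakpoints {P : Set (Set (Fin (n + 1)))}
    (hP : IsDecomposition (pathGraph (n + 1)) P) {a b : ℕ} (hab : a ≤ b) (hb : b ≤ n) :
    SameBlock P (a : Fin (n + 1)) (b : Fin (n + 1)) ↔ Disjoint (breakpoints n P) (Ioc a b) := by
  induction b, hab using Nat.le_induction with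
  | base => simp [sameBlock_refl hP.1]
  | succ b hab ih =>
    have hcast : ∀ i ≤ n, ((i : Fin (n + 1)) : ℕ) = i := fun i hi => Fin.val_cast_of_lt (by omega)
    have hnot : b + 1 ∉ breakpoints n P ↔
        SameBlock P (b : Fin (n + 1)) ((b + 1 : ℕ) : Fin (n + 1)) := by
      simp [breakpoints, hb]
    rw [← insert_Ioc_right_eq_Ioc_add_one hab, disjoint_insert_right, ← ih (by omega), hnot]
    constructor
    · rintro ⟨U, hU, ha, hb1⟩
      have hbU : (b : Fin (n + 1)) ∈ U :=
        (preconnected_induce_pathGraph_iff.1 (hP.2 U hU).preconnected).out ha hb1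
          ⟨Fin.le_def.2 (by rw [hcast a (by omega), hcast b (by omega)]; omega),
           Fin.le_def.2 (by rw [hcast b (by omega), hcast (b + 1) hb]; omega)⟩
      exact ⟨⟨U, hU, hbU, hb1⟩, ⟨U, hU, ha, hbU⟩⟩
    · rintro ⟨h1, h2⟩
      exact sameBlock_trans hP.1 h2 h1

lemma multicutVec_eq_cutVec_breakpoints {P : Set (Set (Fin (n + 1)))}
    (hP : IsDecomposition (pathGraph (n + 1)) P) :
    multicutVec ⊤ P = cutVec n (breakpoints n P) := by
  refine funext_sym2_of_le fun a b hab => ?_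
  have h := sameBlock_iff_disjoint_breakpoints hP (Fin.le_def.1 hab) (Fin.is_le b)
  simp only [Fin.cast_val_eq_self] at h
  simp only [multicutVec_top_mk hP.1, cutVec_mk_of_le _ hab, h]

lemma liftedVectors_pathGraph_top :
    liftedVectors (pathGraph (n + 1)) ⊤ = Set.range (cutVec n) := by
  ext x
  constructor
  · rintro ⟨P, hP, rfl⟩
    exact ⟨_, (multicutVec_eq_cutVec_breakpoints hP).symm⟩
  · rintro ⟨S, rfl⟩
    exact ⟨_, isDecomposition_intervalPartition S, (multicutVec_intervalPartition S).symm⟩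

def pathIneqs (n : ℕ) : Set (Sym2 (Fin (n + 1)) → ℝ) :=
  {x : Sym2 (Fin (n + 1)) → ℝ |
    (∀ e : Sym2 (Fin (n + 1)), e.IsDiag → x e = 0) ∧
    x s((0 : Fin (n + 1)), (n : Fin (n + 1))) ≤ 1 ∧
    (∀ i : ℕ, 1 ≤ i → i ≤ n - 1 →
      x s((i : Fin (n + 1)), (n : Fin (n + 1)))
        ≤ x s(((i - 1 : ℕ) : Fin (n + 1)), (n : Fin (n + 1)))) ∧
    (∀ i : ℕ, 1 ≤ i → i ≤ n - 1 →
      x s((0 : Fin (n + 1)), (i : Fin (n + 1)))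
        ≤ x s((0 : Fin (n + 1)), ((i + 1 : ℕ) : Fin (n + 1)))) ∧
    (∀ i : ℕ, 1 ≤ i → i ≤ n - 1 →
      x s(((i - 1 : ℕ) : Fin (n + 1)), ((i + 1 : ℕ) : Fin (n + 1)))
        ≤ x s(((i - 1 : ℕ) : Fin (n + 1)), (i : Fin (n + 1)))
          + x s((i : Fin (n + 1)), ((i + 1 : ℕ) : Fin (n + 1)))) ∧
    (∀ j k : ℕ, j + 2 < k → k ≤ n →
      x s((j : Fin (n + 1)), (k : Fin (n + 1)))
          + x s(((j + 1 : ℕ) : Fin (n + 1)), ((k - 1 : ℕ) : Fin (n + 1)))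
        ≤ x s(((j + 1 : ℕ) : Fin (n + 1)), (k : Fin (n + 1)))
          + x s((j : Fin (n + 1)), ((k - 1 : ℕ) : Fin (n + 1))))}

lemma cutVec_mem_pathIneqs (S : Finset ℕ) : cutVec n S ∈ pathIneqs n := by
  have hm := breakCount_mono S
  refine ⟨?_, ?_, fun i h1 h2 => ?_, fun i h1 h2 => ?_, fun i h1 h2 => ?_, fun j k h1 h2 => ?_⟩
  · intro e he
    induction e with
    | _ a b =>
      obtain rfl : a = b := he
      simp [cutVec_mk]
  all_goals
    simp (disch := omega) only [cutVec_mk, Fin.val_natCast, Fin.val_zero, Nat.mod_eq_of_lt]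
  · split_ifs <;> norm_num
  · have := hm (show i - 1 ≤ i by omega); have := hm (show i ≤ n by omega)
    split_ifs <;> grind
  · have := hm (show 0 ≤ i by omega); have := hm (show i ≤ i + 1 by omega)
    split_ifs <;> grind
  · have := hm (show i - 1 ≤ i by omega); have := hm (show i ≤ i + 1 by omega)
    split_ifs <;> grind
  · have := hm (show j ≤ j + 1 by omega); have := hm (show j + 1 ≤ k - 1 by omega)
    have := hm (show k - 1 ≤ k by omega)
    split_ifs <;> grind

lemma convex_pathIneqs : Convex ℝ (pathIneqs n) := by
  rintro x ⟨hx0, hx1, hx2, hx3, hx4, hx5⟩ y ⟨hy0, hy1, hy2, hy3, hy4, hy5⟩ a b ha hb hab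
  simp only [pathIneqs, Set.mem_ofPred_eq, Pi.add_apply, Pi.smul_apply, smul_eq_mul]
  refine ⟨fun e he => ?_, ?_, fun i h1 h2 => ?_, fun i h1 h2 => ?_, fun i h1 h2 => ?_,
    fun j k h1 h2 => ?_⟩
  · simp [hx0 e he, hy0 e he]
  · nlinarith
  · nlinarith [hx2 i h1 h2, hy2 i h1 h2]
  · nlinarith [hx3 i h1 h2, hy3 i h1 h2]
  · nlinarith [hx4 i h1 h2, hy4 i h1 h2]
  · nlinarith [hx5 j k h1 h2, hy5 j k h1 h2]

def backDiff (g : ℕ → ℝ) : ℕ → ℝ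
  | 0 => g 0
  | a + 1 => g (a + 1) - g a

lemma sum_filter_le_add_one {ι : Type*} (s : Finset ι) (L : ι → ℕ) (F : ι → ℝ) (u : ℕ) :
    ∑ i ∈ s with L i ≤ u + 1, F i = ∑ i ∈ s with L i ≤ u, F i + ∑ i ∈ s with L i = u + 1, F i := by
  rw [← sum_union (disjoint_filter.2 fun _ _ h1 h2 => by omega)]
  congr 1
  ext i
  simp only [mem_filter, mem_union]
  grind

lemma sum_filter_le_mul_eq {ι : Type*} (s : Finset ι) (L : ι → ℕ) (μ : ι → ℝ) {f g h : ℕ → ℝ}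
    {m : ℕ} (hg : ∀ u ≤ m, ∑ i ∈ s with L i ≤ u, μ i = g u)
    (hf : ∀ a ≤ m, f a * backDiff g a = backDiff h a) :
    ∀ u ≤ m, ∑ i ∈ s with L i ≤ u, μ i * f (L i) = h u := by
  intro u hu
  induction u with
  | zero =>
    have h0 : f 0 * g 0 = h 0 := hf 0 hu
    rw [← h0, ← hg 0 hu, mul_sum]
    refine sum_congr rfl fun i hi => ?_
    rw [Nat.le_zero.1 (mem_filter.1 hi).2, mul_comm]
  | succ u ih =>
    have hstep : f (u + 1) * (g (u + 1) - g u) = h (u + 1) - h u := hf (u + 1) hu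
    have hfibre : ∑ i ∈ s with L i = u + 1, μ i = g (u + 1) - g u := by
      rw [← hg u (by omega), ← hg (u + 1) hu, sum_filter_le_add_one]
      ring
    rw [sum_filter_le_add_one, ih (by omega),
      sum_congr rfl fun i hi => by rw [(mem_filter.1 hi).2], ← sum_mul, hfibre, mul_comm, hstep]
    ring

/-- One step of a Markov chain on breakpoint sets `S ⊆ {1, …, m}`: the node `m + 1` joins the
block of `m`, whose left end is `S.sup id`, with probability `f (S.sup id)`, and otherwise
becomes a breakpoint. -/
noncomputable def extendDist (μ : Finset ℕ → ℝ) (f : ℕ → ℝ) (m : ℕ) (S : Finset ℕ) : ℝ :=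
  if m + 1 ∈ S then μ (S.erase (m + 1)) * (1 - f ((S.erase (m + 1)).sup id))
  else μ S * f (S.sup id)

lemma sum_extendDist (μ : Finset ℕ → ℝ) (f : ℕ → ℝ) (m : ℕ) (p : Finset ℕ → Prop)
    [DecidablePred p] :
    ∑ S ∈ (Icc 1 (m + 1)).powerset with p S, extendDist μ f m S =
      ∑ S ∈ (Icc 1 m).powerset with p S, μ S * f (S.sup id) +
        ∑ S ∈ (Icc 1 m).powerset with p (insert (m + 1) S), μ S * (1 - f (S.sup id)) := by
  have hnotin : ∀ S ∈ (Icc 1 m).powerset, m + 1 ∉ S := fun S hS hm =>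
    by simpa using mem_powerset.1 hS hm
  rw [← insert_Icc_right_eq_Icc_add_one (by omega), sum_filter,
    sum_powerset_insert (by simp), sum_filter, sum_filter]
  congr 1 <;> refine sum_congr rfl fun S hS => ?_
  · simp [extendDist, hnotin S hS]
  · simp [extendDist, erase_insert (hnotin S hS)]

lemma sup_le_of_subset_Icc {S : Finset ℕ} {m : ℕ} (hS : S ⊆ Icc 1 m) : S.sup id ≤ m :=
  Finset.sup_le fun _ hs => (mem_Icc.1 (hS hs)).2

lemma disjoint_Ioc_iff_sup_le {S : Finset ℕ} {m u v : ℕ} (hS : S ⊆ Icc 1 m) (hv : m ≤ v) :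
    Disjoint S (Ioc u v) ↔ S.sup id ≤ u := by
  rw [Finset.sup_le_iff, Finset.disjoint_left]
  refine forall₂_congr fun s hs => ?_
  have := (mem_Icc.1 (hS hs)).2
  simp only [mem_Ioc, id]
  omega

lemma subset_Icc_of_notMem {S : Finset ℕ} {m : ℕ} (hS : S ⊆ Icc 1 (m + 1)) (hm : m + 1 ∉ S) :
    S ⊆ Icc 1 m := fun s hs => by
  have := mem_Icc.1 (hS hs)
  have : s ≠ m + 1 := fun h => hm (h ▸ hs)
  exact mem_Icc.2 ⟨by omega, by omega⟩

/-- `μ` is a probability distribution on breakpoint sets `S ⊆ {1, …, m}` under which `u ≤ v`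
share a block with probability `Y u v`. -/
def IsBreakpointLaw (Y : ℕ → ℕ → ℝ) (m : ℕ) (μ : Finset ℕ → ℝ) : Prop :=
  (∀ S ⊆ Icc 1 m, 0 ≤ μ S) ∧ ∑ S ∈ (Icc 1 m).powerset, μ S = 1 ∧
    ∀ u v, u ≤ v → v ≤ m → ∑ S ∈ (Icc 1 m).powerset with Disjoint S (Ioc u v), μ S = Y u v

lemma extendDist_nonneg {μ : Finset ℕ → ℝ} {f : ℕ → ℝ} {m : ℕ} (hμ : ∀ S ⊆ Icc 1 m, 0 ≤ μ S)
    (hf : ∀ a ≤ m, 0 ≤ f a ∧ f a ≤ 1) {S : Finset ℕ} (hS : S ⊆ Icc 1 (m + 1)) :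
    0 ≤ extendDist μ f m S := by
  unfold extendDist
  split_ifs with hm
  · have hS' := subset_Icc_of_notMem ((erase_subset _ S).trans hS) (notMem_erase _ S)
    exact mul_nonneg (hμ _ hS') (sub_nonneg.2 (hf _ (sup_le_of_subset_Icc hS')).2)
  · have hS' := subset_Icc_of_notMem hS hm
    exact mul_nonneg (hμ S hS') (hf _ (sup_le_of_subset_Icc hS')).1

lemma IsBreakpointLaw.extend {Y : ℕ → ℕ → ℝ} {m : ℕ} {μ : Finset ℕ → ℝ} {f : ℕ → ℝ}
    (hμ : IsBreakpointLaw Y m μ) (hdiag : Y (m + 1) (m + 1) = 1)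
    (hf : ∀ a ≤ m, 0 ≤ f a ∧ f a ≤ 1)
    (hfY : ∀ a ≤ m, f a * backDiff (Y · m) a = backDiff (Y · (m + 1)) a) :
    IsBreakpointLaw Y (m + 1) (extendDist μ f m) := by
  obtain ⟨hμ0, hμ1, hμY⟩ := hμ
  have htotal : ∑ S ∈ (Icc 1 (m + 1)).powerset, extendDist μ f m S = 1 := by
    have := sum_extendDist μ f m fun _ => True
    simp only [filter_true] at this
    rw [this, ← sum_add_distrib]
    exact (sum_congr rfl fun S _ => by ring).trans hμ1
  refine ⟨fun S hS => extendDist_nonneg hμ0 hf hS, htotal, fun u v huv hv => ?_⟩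
  rcases Nat.lt_or_ge v (m + 1) with hvm | hvm
  · have hins : ∀ S, Disjoint (insert (m + 1) S) (Ioc u v) ↔ Disjoint S (Ioc u v) := fun S => by
      rw [disjoint_insert_left, and_iff_right (by simp only [mem_Ioc]; omega)]
    rw [sum_extendDist]
    simp only [hins]
    rw [← sum_add_distrib, ← hμY u v huv (by omega)]
    exact sum_congr rfl fun S _ => by ring
  rcases Nat.lt_or_ge u (m + 1) with hum | hum
  · obtain rfl : v = m + 1 := by omega
    rw [sum_extendDist, filter_false_of_mem fun S _ h =>
        (disjoint_insert_left.1 h).1 (mem_Ioc.2 ⟨hum, le_rfl⟩), sum_empty, add_zero,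
      filter_congr fun S hS => disjoint_Ioc_iff_sup_le (mem_powerset.1 hS) (Nat.le_succ m)]
    refine sum_filter_le_mul_eq _ (fun S => S.sup id) μ (g := (Y · m)) (fun w hw => ?_) hfY u
      (by omega)
    rw [← hμY w m hw le_rfl,
      filter_congr fun S hS => disjoint_Ioc_iff_sup_le (mem_powerset.1 hS) le_rfl]
  · obtain ⟨rfl, rfl⟩ : u = m + 1 ∧ v = m + 1 := ⟨by omega, by omega⟩
    simpa [hdiag] using htotal

theorem exists_isBreakpointLaw (Y : ℕ → ℕ → ℝ) (m : ℕ) (hdiag : ∀ a ≤ m, Y a a = 1)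
    (hnonneg : ∀ a b, a < b → b ≤ m → 0 ≤ backDiff (Y · b) a)
    (hanti : ∀ a b, a ≤ b → b < m → backDiff (Y · (b + 1)) a ≤ backDiff (Y · b) a) :
    ∃ μ, IsBreakpointLaw Y m μ := by
  induction m with
  | zero =>
    refine ⟨fun _ => 1, fun _ _ => zero_le_one, by simp, fun u v huv hv => ?_⟩
    obtain ⟨rfl, rfl⟩ : u = 0 ∧ v = 0 := ⟨by omega, by omega⟩
    simp [hdiag 0 le_rfl]
  | succ m ih =>
    obtain ⟨μ, hμ⟩ := ih (fun a ha => hdiag a (by omega))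
      (fun a b hab hb => hnonneg a b hab (by omega)) (fun a b hab hb => hanti a b hab (by omega))
    have hN (a : ℕ) (ha : a ≤ m) := hnonneg a (m + 1) (by omega) le_rfl
    have hND (a : ℕ) (ha : a ≤ m) := hanti a m ha (by omega)
    refine ⟨_, hμ.extend (hdiag (m + 1) le_rfl)
      (f := fun a => backDiff (Y · (m + 1)) a / backDiff (Y · m) a) (fun a ha => ?_) fun a ha => ?_⟩
    · exact ⟨div_nonneg (hN a ha) ((hN a ha).trans (hND a ha)),
        div_le_one_of_le₀ (hND a ha) ((hN a ha).trans (hND a ha))⟩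
    · rcases ((hN a ha).trans (hND a ha)).eq_or_lt with hD | hD
      · simp [← hD, le_antisymm (hD ▸ hND a ha) (hN a ha)]
      · exact div_mul_cancel₀ _ hD.ne'

noncomputable def sameProb (x : Sym2 (Fin (n + 1)) → ℝ) (u v : ℕ) : ℝ :=
  1 - x s((u : Fin (n + 1)), (v : Fin (n + 1)))

variable {x : Sym2 (Fin (n + 1)) → ℝ}

lemma backDiff_sameProb_succ_le (hx : x ∈ pathIneqs n) {a b : ℕ} (hab : a ≤ b) (hb : 1 ≤ b)
    (hbn : b < n) : backDiff (sameProb x · (b + 1)) a ≤ backDiff (sameProb x · b) a := by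
  obtain ⟨hdiag, -, -, hzr, htri, hsq⟩ := hx
  cases a with
  | zero =>
    have := hzr b hb (by omega)
    simp only [backDiff, sameProb, Nat.cast_zero]
    linarith
  | succ a =>
    rcases (show a + 1 < b ∨ a + 1 = b by omega) with hlt | rfl
    · have := hsq a (b + 1) (by omega) (by omega)
      simp only [Nat.add_sub_cancel] at this
      simp only [backDiff, sameProb]
      linarith
    · have := htri (a + 1) (by omega) (by omega)
      have h0 := hdiag s(((a + 1 : ℕ) : Fin (n + 1)), ((a + 1 : ℕ) : Fin (n + 1))) rfl
      simp only [Nat.add_sub_cancel] at this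
      simp only [backDiff, sameProb]
      linarith

lemma backDiff_sameProb_top_le (hx : x ∈ pathIneqs n) {a b : ℕ} (hab : a ≤ b) (hb : 1 ≤ b)
    (hbn : b ≤ n) : backDiff (sameProb x · n) a ≤ backDiff (sameProb x · b) a := by
  induction hbn using Nat.decreasingInduction with
  | self => exact le_rfl
  | of_succ b hbn ih =>
    exact (ih (by omega) (by omega)).trans (backDiff_sameProb_succ_le hx hab hb hbn)

lemma backDiff_sameProb_top_nonneg (hx : x ∈ pathIneqs n) {a : ℕ} (ha : a < n) :
    0 ≤ backDiff (sameProb x · n) a := by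
  obtain ⟨-, h1, hmn, -⟩ := hx
  cases a with
  | zero => simpa [backDiff, sameProb] using h1
  | succ a =>
    have := hmn (a + 1) (by omega) (by omega)
    simp only [Nat.add_sub_cancel] at this
    simp only [backDiff, sameProb]
    linarith

lemma backDiff_sameProb_nonneg (hx : x ∈ pathIneqs n) {a b : ℕ} (hab : a < b) (hbn : b ≤ n) :
    0 ≤ backDiff (sameProb x · b) a :=
  (backDiff_sameProb_top_nonneg hx (by omega)).trans
    (backDiff_sameProb_top_le hx hab.le (by omega) hbn)

lemma backDiff_sameProb_anti (hn : 2 ≤ n) (hx : x ∈ pathIneqs n) {a b : ℕ} (hab : a ≤ b)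
    (hbn : b < n) : backDiff (sameProb x · (b + 1)) a ≤ backDiff (sameProb x · b) a := by
  rcases Nat.eq_zero_or_pos b with rfl | hb
  · obtain rfl : a = 0 := by omega
    -- `x_{01} = d_1(1) ≥ d_n(1) ≥ 0`
    have h01 := (backDiff_sameProb_top_nonneg hx (show 1 < n by omega)).trans
      (backDiff_sameProb_top_le hx le_rfl le_rfl (by omega))
    have h00 := hx.1 s(((0 : ℕ) : Fin (n + 1)), ((0 : ℕ) : Fin (n + 1))) rfl
    have h11 := hx.1 s(((1 : ℕ) : Fin (n + 1)), ((1 : ℕ) : Fin (n + 1))) rfl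
    simp only [backDiff, sameProb, zero_add] at h01 ⊢
    linarith
  · exact backDiff_sameProb_succ_le hx hab hb hbn

lemma pathIneqs_subset_convexHull (hn : 2 ≤ n) :
    pathIneqs n ⊆ convexHull ℝ (Set.range (cutVec n)) := by
  intro x hx
  obtain ⟨μ, hμ0, hμ1, hμY⟩ := exists_isBreakpointLaw (sameProb x) n
    (fun a _ => by simp [sameProb, hx.1 _ (Sym2.mk_isDiag_iff.2 rfl)])
    (fun _ _ hab hb => backDiff_sameProb_nonneg hx hab hb)
    (fun _ _ hab hb => backDiff_sameProb_anti hn hx hab hb)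
  have hxμ : x = ∑ S ∈ (Icc 1 n).powerset, μ S • cutVec n S := by
    refine funext_sym2_of_le fun a b hab => ?_
    have hY := hμY a b (Fin.le_def.1 hab) (Fin.is_le b)
    have hsplit := sum_filter_add_sum_filter_not (Icc 1 n).powerset (Disjoint · (Ioc (a : ℕ) b)) μ
    simp only [sameProb, Fin.cast_val_eq_self] at hY
    simp only [Finset.sum_apply, Pi.smul_apply, smul_eq_mul, cutVec_mk_of_le _ hab, mul_ite,
      mul_zero, mul_one, sum_ite, sum_const_zero, zero_add]
    linarith
  rw [hxμ]
  exact (convex_convexHull ℝ _).sum_mem (fun S hS => hμ0 S (mem_powerset.1 hS)) hμ1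
    fun S _ => subset_convexHull ℝ _ ⟨S, rfl⟩

end PathMulticut

/-- complete description of the lifted multicut polytope of a path of
length `n ≥ 2` (nodes `0, …, n`), lifted to the complete graph. -/
theorem lmc_path_complete_description (n : ℕ) (hn : 2 ≤ n) :
    LMC (SimpleGraph.pathGraph (n + 1)) ⊤ =
      {x : Sym2 (Fin (n + 1)) → ℝ |
        (∀ e : Sym2 (Fin (n + 1)), e.IsDiag → x e = 0) ∧
        x s((0 : Fin (n + 1)), (n : Fin (n + 1))) ≤ 1 ∧
        (∀ i : ℕ, 1 ≤ i → i ≤ n - 1 →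
          x s((i : Fin (n + 1)), (n : Fin (n + 1)))
            ≤ x s(((i - 1 : ℕ) : Fin (n + 1)), (n : Fin (n + 1)))) ∧
        (∀ i : ℕ, 1 ≤ i → i ≤ n - 1 →
          x s((0 : Fin (n + 1)), (i : Fin (n + 1)))
            ≤ x s((0 : Fin (n + 1)), ((i + 1 : ℕ) : Fin (n + 1)))) ∧
        (∀ i : ℕ, 1 ≤ i → i ≤ n - 1 →
          x s(((i - 1 : ℕ) : Fin (n + 1)), ((i + 1 : ℕ) : Fin (n + 1)))
            ≤ x s(((i - 1 : ℕ) : Fin (n + 1)), (i : Fin (n + 1)))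
              + x s((i : Fin (n + 1)), ((i + 1 : ℕ) : Fin (n + 1)))) ∧
        (∀ j k : ℕ, j + 2 < k → k ≤ n →
          x s((j : Fin (n + 1)), (k : Fin (n + 1)))
              + x s(((j + 1 : ℕ) : Fin (n + 1)), ((k - 1 : ℕ) : Fin (n + 1)))
            ≤ x s(((j + 1 : ℕ) : Fin (n + 1)), (k : Fin (n + 1)))
              + x s((j : Fin (n + 1)), ((k - 1 : ℕ) : Fin (n + 1))))} := by
  change LMC _ _ = PathMulticut.pathIneqs n
  rw [LMC, PathMulticut.liftedVectors_pathGraph_top]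
  refine (convexHull_min ?_ PathMulticut.convex_pathIneqs).antisymm
    (PathMulticut.pathIneqs_subset_convexHull hn)
  exact Set.range_subset_iff.2 PathMulticut.cutVec_mem_pathIneqs
end

section
/- Let T be the path with nodes {0,…,n} and let F ⊆ binom(V,2) \ E be a set of augmentation edges. Construct the hypergraph H whose nodes are the n edges of T and whose hyperedges are the edge sets E_{uv} of the subpaths corresponding to pairs uv ∈ F with |E_{uv}| ≥ 2. Then H is β-acyclic; i.e., repeatedly removing nest points reduces H to the empty hypergraph. -/
/-- Successive nest-point elimination: a hypergraph (given by its node set and its set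
of hyperedges) can be reduced to the empty hypergraph by repeatedly removing a nest
point (a node `v` such that the hyperedges containing `v` form a chain under
inclusion) and deleting it from all hyperedges.  By a theorem of Duris, this holds
iff the hypergraph is β-acyclic. -/
inductive NestElim : Finset ℕ → Finset (Finset ℕ) → Prop where
  | empty (E : Finset (Finset ℕ)) : NestElim ∅ E
  | step (Vs : Finset ℕ) (Es : Finset (Finset ℕ)) (v : ℕ) (hv : v ∈ Vs)
      (hnest : ∀ e ∈ Es, ∀ f ∈ Es, v ∈ e → v ∈ f → e ⊆ f ∨ f ⊆ e)
      (h : NestElim (Vs.erase v) (Es.image (fun e => e.erase v))) :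
      NestElim Vs Es

/-- Auxiliary: if the node set is the interval `[k, k+m)` and every hyperedge is an
interval `[u, v)` with `k ≤ u`, then nest-point elimination succeeds by removing the
leftmost node `k` repeatedly. -/
lemma nestElim_of_intervals (m : ℕ) : ∀ (k : ℕ) (Es : Finset (Finset ℕ)),
    (∀ e ∈ Es, ∃ u v, k ≤ u ∧ e = Finset.Ico u v) →
    NestElim (Finset.Ico k (k + m)) Es := by
  induction m with
  | zero =>
    intro k Es _
    simpa using NestElim.empty Es
  | succ m ih =>
    intro k Es hEs
    refine NestElim.step _ _ k (by simp) ?_ ?_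
    · intro e he f hf hke hkf
      obtain ⟨u, v, hku, rfl⟩ := hEs e he
      obtain ⟨u', v', hku', rfl⟩ := hEs f hf
      simp only [Finset.mem_Ico] at hke hkf
      have hu : u = k := le_antisymm hke.1 hku
      have hu' : u' = k := le_antisymm hkf.1 hku'
      subst hu hu'
      rcases le_total v v' with h | h
      · exact Or.inl (Finset.Ico_subset_Ico le_rfl h)
      · exact Or.inr (Finset.Ico_subset_Ico le_rfl h)
    · have hV : (Finset.Ico k (k + (m + 1))).erase k = Finset.Ico (k + 1) ((k + 1) + m) := by
        ext x; simp [Finset.mem_Ico, Finset.mem_erase]; omega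
      rw [hV]
      apply ih
      intro e he
      simp only [Finset.mem_image] at he
      obtain ⟨f, hf, rfl⟩ := he
      obtain ⟨u, v, hku, rfl⟩ := hEs f hf
      refine ⟨max u (k + 1), v, le_max_right _ _, ?_⟩
      ext x; simp [Finset.mem_Ico, Finset.mem_erase]; omega

/-- the hypergraph of the path partition problem is β-acyclic.  The path
has nodes `0, …, n` and edges `{i, i+1}` indexed by `i ∈ {0, …, n-1}`; each
augmentation pair `(u, v) ∈ F` with `u + 2 ≤ v ≤ n` (i.e. `|E_{uv}| ≥ 2`) yields the
hyperedge `E_{uv} = {u, …, v-1}` of path-edge indices. -/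
theorem path_partition_hypergraph_beta_acyclic
    (n : ℕ) (F : Finset (ℕ × ℕ))
    (hF : ∀ p ∈ F, p.1 + 2 ≤ p.2 ∧ p.2 ≤ n) :
    NestElim (Finset.range n) (F.image fun p => Finset.Ico p.1 p.2) := by
  have := nestElim_of_intervals n 0 (F.image fun p => Finset.Ico p.1 p.2) ?_
  · rwa [Nat.zero_add, ← Finset.range_eq_Ico] at this
  · intro e he
    simp only [Finset.mem_image] at he
    obtain ⟨p, hp, rfl⟩ := he
    exact ⟨p.1, p.2, Nat.zero_le _, rfl⟩
end

section
/- Let n ≥ 5, let 5 ≤ k ≤ n with k odd, set d = (k−1)/2, and let v : Z_k → Z_n be injective. Then every characteristic vector x of a multicut of the complete graph K_n satisfies the half-chorded odd cycle inequality Σ_{i ∈ Z_k} ( x_{v_i v_{i+d}} − x_{v_i v_{i+1}} ) ≤ k − 3. -/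
open Finset

open scoped Classical

variable {V : Type*}

/-! A multicut of `K_n` pulled back along `v` is the `0/1` separation function `c` of an
equivalence relation on `Z_k`; it vanishes on the diagonal, is bounded by `1` and satisfies the
triangle inequality. Walking from `i` to `i + d` in `d` unit steps bounds each chord term by the
cycle edges in between, and shifting the index shows that summing over `i` gives
`∑ chords ≤ d ∑ edges`. Together with `∑ chords ≤ k`, this gives
`d (∑ chords - ∑ edges) ≤ (d - 1) k`, and since `k > 2d` and everything is integral, the
difference is at most `k - 3`. -/

section SameBlock

variable {P : Set (Set V)}

theorem equivalence_sameBlock (hP : Setoid.IsPartition P) : Equivalence (SameBlock P) where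
  refl a := by
    obtain ⟨U, ⟨hU, haU⟩, -⟩ := hP.2 a
    exact ⟨U, hU, haU, haU⟩
  symm := fun ⟨U, hU, haU, hbU⟩ => ⟨U, hU, hbU, haU⟩
  trans := by
    rintro a b c ⟨U, hU, haU, hbU⟩ ⟨W, hW, hbW, hcW⟩
    obtain ⟨B, -, hB⟩ := hP.2 b
    have hUW : U = W := (hB U ⟨hU, hbU⟩).trans (hB W ⟨hW, hbW⟩).symm
    exact ⟨U, hU, haU, hUW ▸ hcW⟩

noncomputable def blockSep (P : Set (Set V)) (a b : V) : ℤ :=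
  if SameBlock P a b then 0 else 1

theorem blockSep_self (hP : Setoid.IsPartition P) (a : V) : blockSep P a a = 0 :=
  if_pos ((equivalence_sameBlock hP).refl a)

theorem blockSep_le_one (a b : V) : blockSep P a b ≤ 1 := by
  unfold blockSep
  split_ifs <;> norm_num

theorem blockSep_triangle (hP : Setoid.IsPartition P) (a b c : V) :
    blockSep P a c ≤ blockSep P a b + blockSep P b c := by
  have hac := (equivalence_sameBlock hP).trans (x := a) (y := b) (z := c)
  unfold blockSep
  split_ifs <;> simp_all

theorem multicutVec_top_mk (hP : Setoid.IsPartition P) (a b : V) :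
    multicutVec ⊤ P s(a, b) = blockSep P a b := by
  by_cases hab : a = b
  · subst hab
    simp [multicutVec, blockSep_self hP]
  have hcross : Crosses P s(a, b) ↔ ¬ SameBlock P a b := by
    refine ⟨?_, fun h => ⟨a, b, rfl, h⟩⟩
    rintro ⟨u, w, huw, hsep⟩ hsame
    rcases Sym2.eq_iff.mp huw with ⟨rfl, rfl⟩ | ⟨rfl, rfl⟩
    · exact hsep hsame
    · exact hsep ((equivalence_sameBlock hP).symm hsame)
  by_cases hsame : SameBlock P a b <;> simp [multicutVec, blockSep, hab, hcross, hsame]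

end SameBlock

section Triangle

variable {M : Type*} [AddCommMonoid M] [PartialOrder M] [IsOrderedAddMonoid M]

theorem le_sum_range_of_triangle {α : Type*} {c : α → α → M} (hself : ∀ a, c a a ≤ 0)
    (htri : ∀ a b e, c a e ≤ c a b + c b e) (w : ℕ → α) (m : ℕ) :
    c (w 0) (w m) ≤ ∑ ℓ ∈ range m, c (w ℓ) (w (ℓ + 1)) := by
  induction m with
  | zero => simpa using hself (w 0)
  | succ m ih =>
    rw [sum_range_succ]
    exact (htri _ (w m) _).trans (by gcongr)

theorem sum_chord_le_nsmul_sum_edge {G : Type*} [AddGroup G] [Fintype G] {c : G → G → M}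
    (hself : ∀ a, c a a ≤ 0) (htri : ∀ a b e, c a e ≤ c a b + c b e) (d : ℕ) (t : G) :
    ∑ i, c i (i + d • t) ≤ d • ∑ i, c i (i + t) :=
  calc ∑ i, c i (i + d • t)
      ≤ ∑ i, ∑ ℓ ∈ range d, c (i + ℓ • t) (i + ℓ • t + t) := by
        refine sum_le_sum fun i _ => ?_
        simpa [succ_nsmul, add_assoc] using
          le_sum_range_of_triangle hself htri (fun ℓ => i + ℓ • t) d
    _ = ∑ ℓ ∈ range d, ∑ i, c (i + ℓ • t) (i + ℓ • t + t) := sum_comm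
    _ = d • ∑ i, c i (i + t) := by
        rw [sum_congr rfl fun ℓ _ => Fintype.sum_equiv (Equiv.addRight (ℓ • t))
          (fun i => c (i + ℓ • t) (i + ℓ • t + t)) (fun j => c j (j + t)) fun _ => rfl,
          sum_const, card_range]

end Triangle

theorem Fin.val_nsmul_mk_one {k m : ℕ} [NeZero k] (h1 : 1 < k) (hm : m < k) :
    (m • (⟨1, h1⟩ : Fin k)).val = m := by
  induction m with
  | zero => rfl
  | succ m ih => rw [succ_nsmul, Fin.val_add, ih (by omega)]; exact Nat.mod_eq_of_lt hm

theorem sum_chord_sub_sum_edge_le {G : Type*} [AddGroup G] [Fintype G] {c : G → G → ℤ}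
    (hself : ∀ a, c a a ≤ 0) (htri : ∀ a b e, c a e ≤ c a b + c b e) (hle : ∀ a b, c a b ≤ 1)
    {d : ℕ} (hd : 1 ≤ d) (hdG : 2 * d < Fintype.card G) (t : G) :
    ∑ i, (c i (i + d • t) - c i (i + t)) ≤ Fintype.card G - 3 := by
  rw [sum_sub_distrib]
  set Z := ∑ i, c i (i + d • t)
  set Y := ∑ i, c i (i + t)
  have hZY : Z ≤ d * Y := by
    simpa only [nsmul_eq_mul] using sum_chord_le_nsmul_sum_edge hself htri d t
  have hZ : Z ≤ Fintype.card G := by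
    simpa using sum_le_sum fun i (_ : i ∈ univ) => hle i (i + d • t)
  have hd' : (1 : ℤ) ≤ d := by exact_mod_cast hd
  have hdG' : 2 * (d : ℤ) < Fintype.card G := by exact_mod_cast hdG
  have hscaled : d * (Z - Y) ≤ (d - 1) * (Fintype.card G : ℤ) :=
    calc d * (Z - Y) = (d - 1) * Z + (Z - d * Y) := by ring
      _ ≤ (d - 1) * Fintype.card G + 0 :=
          add_le_add (mul_le_mul_of_nonneg_left hZ (by linarith)) (by linarith)
      _ = (d - 1) * Fintype.card G := add_zero _
  -- `Z - Y` is an integer strictly below `card G - 2`, since `card G > 2 d`.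
  by_contra! hlt
  nlinarith [mul_le_mul_of_nonneg_left (show (Fintype.card G : ℤ) - 2 ≤ Z - Y by linarith)
    (show (0 : ℤ) ≤ d by linarith)]

/-- validity of the half-chorded odd cycle inequality for the multicut
polytope of the complete graph `K_n`: for odd `5 ≤ k ≤ n`, `d = (k-1)/2` and an
injective `v : Z_k → Z_n` (nodes as `Fin n`, indices as `Fin k` with cyclic addition),
every characteristic vector `x` of a multicut of `K_n` satisfies
`∑_i (x_{v_i v_{i+d}} - x_{v_i v_{i+1}}) ≤ k - 3`. -/
theorem half_chorded_odd_cycle_inequality_valid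
    (n k : ℕ) (hk : 5 ≤ k)
    (v : Fin k → Fin n)
    (x : Sym2 (Fin n) → ℝ)
    (hx : x ∈ liftedVectors (⊤ : SimpleGraph (Fin n)) ⊤) :
    ∑ i : Fin k,
        (x s(v i, v (i + ⟨(k - 1) / 2, by omega⟩)) - x s(v i, v (i + ⟨1, by omega⟩)))
      ≤ (k : ℝ) - 3 := by
  obtain ⟨P, ⟨hP, -⟩, rfl⟩ := hx
  have : NeZero k := ⟨by omega⟩
  have hchord : (⟨(k - 1) / 2, by omega⟩ : Fin k) = ((k - 1) / 2) • (⟨1, by omega⟩ : Fin k) :=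
    Fin.ext (Fin.val_nsmul_mk_one _ (by omega)).symm
  simp only [multicutVec_top_mk hP, hchord]
  have hcycle := sum_chord_sub_sum_edge_le (c := fun a b => blockSep P (v a) (v b))
    (fun a => (blockSep_self hP (v a)).le) (fun a b e => blockSep_triangle hP _ (v b) _)
    (fun a b => blockSep_le_one _ _) (d := (k - 1) / 2) (by omega) (by simp; omega)
    (⟨1, by omega⟩ : Fin k)
  rw [Fintype.card_fin] at hcycle
  exact_mod_cast hcycle
end
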